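/- arXiv:2208.06785 — 2 statements merged into one kernel-verified Lean document; each statement's English description precedes it below -/
import Mathlib

section
/- Let σ be the HMW strategy on S = ℝ, i.e. σ_0(dz) = f_0(z) dz and σ_n(x, dz) = f_n(z | x) dz for n ≥ 1 and x ∈ ℝ^n, where the densities f_n are given by the copula recursion. Then the coordinate process X = (X_1, X_2, ...) is conditionally identically distributed (c.i.d.) under P_σ. -/
open MeasureTheory ProbabilityTheory

namespace PredictiveBayes

variable {S : Type*} [MeasurableSpace S]

/-- The finite-dimensional distributions determined by a strategy `κ`:
`stratFDD κ n` is the law of `(X_1, …, X_n)` under `P_κ`. -/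
noncomputable def stratFDD (κ : ∀ n, Kernel (Fin n → S) S) : ∀ n, Measure (Fin n → S)
  | 0 => Measure.dirac (fun i : Fin 0 => i.elim0)
  | n + 1 => (stratFDD κ n).bind (fun x => ((κ n) x).map (Fin.snoc x))

/-- `P` is the Ionescu–Tulcea law `P_κ` of the strategy `κ`. -/
def IsStrategyLaw (κ : ∀ n, Kernel (Fin n → S) S) (P : Measure (ℕ → S)) : Prop :=
  ∀ n, P.map (fun ω (i : Fin n) => ω i) = stratFDD κ n

/-- The process `Y` is conditionally identically distributed (c.i.d.) under `P`. -/
def CID {Ω : Type*} [MeasurableSpace Ω] (P : Measure Ω) (Y : ℕ → Ω → S) : Prop :=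
  P.map (Y 1) = P.map (Y 0) ∧
  ∀ n m : ℕ, 1 ≤ n → n ≤ m → ∀ A : Set S, MeasurableSet A →
    (P[Set.indicator ((Y m) ⁻¹' A) (fun _ => (1 : ℝ)) |
        MeasurableSpace.comap (fun ω (i : Fin n) => Y i ω) inferInstance])
      =ᵐ[P]
    (P[Set.indicator ((Y n) ⁻¹' A) (fun _ => (1 : ℝ)) |
        MeasurableSpace.comap (fun ω (i : Fin n) => Y i ω) inferInstance])

/-- The copula recursion of Hahn–Martin–Walker. -/
noncomputable def hmwDensity (f0 : ℝ → ℝ) (c : ℕ → ℝ → ℝ → ℝ) :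
    ∀ n, (Fin n → ℝ) → ℝ → ℝ
  | 0 => fun _ z => f0 z
  | n + 1 => fun x z =>
      c (n + 1) (∫ t in Set.Iic z, hmwDensity f0 c n (Fin.init x) t)
          (∫ t in Set.Iic (x (Fin.last n)), hmwDensity f0 c n (Fin.init x) t) *
        hmwDensity f0 c n (Fin.init x) z

/-! The predictive measures of the HMW strategy form a martingale. The CDF `F_n(· | x)` of the
atomless law `σ_n(x)` pushes it forward to the uniform law on `[0, 1]`, so the copula marginal
`∫ c(u, v) dv = 1` gives `∫ σ_{n+1}((x, y), A) σ_n(x, dy) = σ_n(x, A)`. Iterating this identity,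
`((X_1, …, X_n), X_m)` has law `L(X_1, …, X_n) ⊗ σ_n` for every `m > n`; hence the conditional
distribution of `X_m` given `X_1, …, X_n` does not depend on `m > n`. -/

open Set

lemma measurable_snoc_prod (n : ℕ) :
    Measurable (fun p : (Fin n → S) × S => (Fin.snoc p.1 p.2 : Fin (n + 1) → S)) := by
  refine measurable_pi_lambda _ fun i => ?_
  refine Fin.lastCases ?_ (fun j => ?_) i
  · simp only [Fin.snoc_last]; fun_prop
  · simp only [Fin.snoc_castSucc]; fun_prop

lemma measurable_snoc {n : ℕ} (x : Fin n → S) :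
    Measurable (fun y : S => (Fin.snoc x y : Fin (n + 1) → S)) :=
  (measurable_snoc_prod n).comp measurable_prodMk_left

@[fun_prop]
lemma measurable_fin_take {n m : ℕ} (h : n ≤ m) :
    Measurable (Fin.take n h : (Fin m → S) → Fin n → S) :=
  measurable_pi_lambda _ fun _ => measurable_pi_apply _

lemma Fin.take_snoc {α : Type*} {n m : ℕ} (h : n ≤ m) (x : Fin m → α) (y : α) :
    Fin.take n (Nat.le_succ_of_le h) (Fin.snoc x y : Fin (m + 1) → α) = Fin.take n h x := by
  rw [← Fin.take_init, Fin.init_snoc]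

lemma measurable_map_snoc {n : ℕ} (κ : Kernel (Fin n → S) S) [IsSFiniteKernel κ] :
    Measurable fun x : Fin n → S => (κ x).map fun y => (Fin.snoc x y : Fin (n + 1) → S) := by
  refine Measure.measurable_of_measurable_coe _ fun s hs => ?_
  simp_rw [Measure.map_apply (measurable_snoc _) hs]
  exact Kernel.measurable_kernel_prodMk_left (measurable_snoc_prod n hs)

section StrategyLaw

variable {κ : ∀ n, Kernel (Fin n → S) S} [∀ n, IsMarkovKernel (κ n)]

instance (n : ℕ) : IsProbabilityMeasure (stratFDD κ n) := by
  induction n with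
  | zero => rw [stratFDD]; infer_instance
  | succ n ih =>
    rw [stratFDD]
    exact isProbabilityMeasure_bind (measurable_map_snoc (κ n)).aemeasurable
      (ae_of_all _ fun x => Measure.isProbabilityMeasure_map (measurable_snoc x).aemeasurable)

lemma stratFDD_succ (n : ℕ) :
    stratFDD κ (n + 1) = (stratFDD κ n ⊗ₘ κ n).map fun p => Fin.snoc p.1 p.2 := by
  ext s hs
  rw [stratFDD, Measure.bind_apply hs (measurable_map_snoc (κ n)).aemeasurable,
    Measure.map_apply (measurable_snoc_prod n) hs,
    Measure.compProd_apply (measurable_snoc_prod n hs)]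
  refine lintegral_congr fun x => ?_
  rw [Measure.map_apply (measurable_snoc x) hs]
  rfl

def IsPredictiveMartingale (κ : ∀ n, Kernel (Fin n → S) S) : Prop :=
  ∀ n (x : Fin n → S) (A : Set S), MeasurableSet A →
    ∫⁻ y, κ (n + 1) (Fin.snoc x y) A ∂(κ n x) = κ n x A

lemma IsPredictiveMartingale.setLIntegral_stratFDD_take (hκ : IsPredictiveMartingale κ)
    {n : ℕ} {B : Set (Fin n → S)} (hB : MeasurableSet B) {A : Set S} (hA : MeasurableSet A)
    {m : ℕ} (h : n ≤ m) :
    ∫⁻ x in Fin.take n h ⁻¹' B, κ m x A ∂stratFDD κ m = ∫⁻ x in B, κ n x A ∂stratFDD κ n := by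
  induction m, h using Nat.le_induction with
  | base => rfl
  | succ m h ih =>
    have hpre : (fun p : (Fin m → S) × S => (Fin.snoc p.1 p.2 : Fin (m + 1) → S)) ⁻¹'
        (Fin.take n (Nat.le_succ_of_le h) ⁻¹' B) = (Fin.take n h ⁻¹' B) ×ˢ univ := by
      ext p
      simp only [mem_preimage, mem_prod, mem_univ, and_true]
      rw [Fin.take_snoc]
    rw [stratFDD_succ, setLIntegral_map (measurable_fin_take _ hB)
      ((κ (m + 1)).measurable_coe hA) (measurable_snoc_prod m), hpre,
      Measure.setLIntegral_compProd (f := fun p => κ (m + 1) (Fin.snoc p.1 p.2) A)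
        (((κ (m + 1)).measurable_coe hA).comp (measurable_snoc_prod m))
        (measurable_fin_take h hB) MeasurableSet.univ]
    simp_rw [Measure.restrict_univ, hκ _ _ _ hA]
    exact ih

lemma IsPredictiveMartingale.map_eval_eq_compProd (hκ : IsPredictiveMartingale κ)
    {P : Measure (ℕ → S)} [IsProbabilityMeasure P] (hP : IsStrategyLaw κ P) {n m : ℕ}
    (h : n ≤ m) :
    P.map (fun ω => ((fun i : Fin n => ω i), ω m)) = stratFDD κ n ⊗ₘ κ n := by
  have hproj : Measurable fun (ω : ℕ → S) (i : Fin (m + 1)) => ω i :=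
    measurable_pi_lambda _ fun _ => measurable_pi_apply _
  have hlaw : P.map (fun ω => ((fun i : Fin n => ω i), ω m)) =
      (stratFDD κ m ⊗ₘ κ m).map (Prod.map (Fin.take n h) id) := by
    have hfac : (fun ω : ℕ → S => ((fun i : Fin n => ω i), ω m)) =
        (fun x : Fin (m + 1) → S => (Fin.take n (Nat.le_succ_of_le h) x, x (Fin.last m))) ∘
          fun ω i => ω i := rfl
    rw [hfac, ← Measure.map_map (by fun_prop) hproj, hP, stratFDD_succ,
      Measure.map_map (by fun_prop) (measurable_snoc_prod m)]
    congr 1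
    ext1 p
    simp only [Function.comp_apply, Fin.snoc_last]
    rw [Fin.take_snoc]
    rfl
  have : IsProbabilityMeasure (P.map fun ω => ((fun i : Fin n => ω i), ω m)) :=
    Measure.isProbabilityMeasure_map (by fun_prop)
  refine Measure.ext_prod fun {B A} hB hA => ?_
  rw [hlaw, Measure.map_apply (by fun_prop) (hB.prod hA), preimage_prod_map_prod,
    preimage_id, Measure.compProd_apply_prod (measurable_fin_take h hB) hA,
    Measure.compProd_apply_prod hB hA, hκ.setLIntegral_stratFDD_take hB hA h]

section CondDistrib

open scoped ProbabilityTheory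

variable [StandardBorelSpace S] [Nonempty S]

lemma condExp_indicator_ae_eq_of_map_prodMk_eq {Ω β : Type*} [MeasurableSpace Ω]
    [MeasurableSpace β] {P : Measure Ω} [IsFiniteMeasure P] {X : Ω → β} {Y Y' : Ω → S}
    (hX : Measurable X) (hY : Measurable Y) (hY' : Measurable Y')
    (h : P.map (fun ω => (X ω, Y ω)) = P.map (fun ω => (X ω, Y' ω)))
    {A : Set S} (hA : MeasurableSet A) :
    P⟦Y ⁻¹' A | MeasurableSpace.comap X inferInstance⟧
      =ᵐ[P] P⟦Y' ⁻¹' A | MeasurableSpace.comap X inferInstance⟧ := by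
  have hcond : condDistrib Y X P = condDistrib Y' X P := by simp_rw [condDistrib, h]
  refine (condDistrib_ae_eq_condExp hX hY hA).symm.trans ?_
  rw [hcond]
  exact condDistrib_ae_eq_condExp hX hY' hA

theorem IsPredictiveMartingale.cid (hκ : IsPredictiveMartingale κ) {P : Measure (ℕ → S)}
    [IsProbabilityMeasure P] (hP : IsStrategyLaw κ P) : CID P (fun n ω => ω n) := by
  have hproj (n : ℕ) : Measurable fun (ω : ℕ → S) (i : Fin n) => ω i :=
    measurable_pi_lambda _ fun _ => measurable_pi_apply _
  have hlaw (m : ℕ) : P.map (fun ω => ω m) = (stratFDD κ 0 ⊗ₘ κ 0).snd := by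
    rw [← hκ.map_eval_eq_compProd hP m.zero_le, Measure.snd_map_prodMk (hproj 0)]
  refine ⟨(hlaw 1).trans (hlaw 0).symm, fun n m _ hnm A hA => ?_⟩
  exact condExp_indicator_ae_eq_of_map_prodMk_eq (hproj n) (measurable_pi_apply m)
    (measurable_pi_apply n)
    ((hκ.map_eval_eq_compProd hP hnm).trans (hκ.map_eval_eq_compProd hP le_rfl).symm) hA

end CondDistrib

end StrategyLaw

section ProbabilityIntegralTransform

open Filter Topology

lemma cdf_mem_Icc (μ : Measure ℝ) (z : ℝ) : cdf μ z ∈ Icc (0 : ℝ) 1 :=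
  ⟨cdf_nonneg μ z, cdf_le_one μ z⟩

variable (μ : Measure ℝ) [IsProbabilityMeasure μ] [NullSingletonClass μ]

lemma continuous_cdf : Continuous (cdf μ) := by
  refine continuous_iff_continuousAt.2 fun a => ?_
  have hleft : Function.leftLim (cdf μ) a = cdf μ a := by
    have h := (cdf μ).measure_singleton a
    rw [measure_cdf, measure_singleton, eq_comm, ENNReal.ofReal_eq_zero, sub_nonpos] at h
    exact le_antisymm ((monotone_cdf μ).leftLim_le le_rfl) h
  exact continuousAt_iff_continuous_left'_right'.2
    ⟨(monotone_cdf μ).continuousWithinAt_Iio_iff_leftLim_eq.2 hleft,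
      ((cdf μ).right_continuous a).mono Ioi_subset_Ici_self⟩

lemma measure_cdf_preimage_Iic {a : ℝ} (ha : a ∈ Ioo (0 : ℝ) 1) :
    μ (cdf μ ⁻¹' Iic a) = ENNReal.ofReal a := by
  obtain ⟨z₁, hz₁⟩ := ((tendsto_cdf_atBot μ).eventually_lt_const ha.1).exists
  obtain ⟨z₂, hz₂⟩ := ((tendsto_cdf_atTop μ).eventually_const_lt ha.2).exists
  obtain ⟨z, hz⟩ := intermediate_value_univ z₁ z₂ (continuous_cdf μ) ⟨hz₁.le, hz₂.le⟩
  have hbdd : BddAbove (cdf μ ⁻¹' Iic a) :=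
    ⟨z₂, fun y hy => ((monotone_cdf μ).reflect_lt (lt_of_le_of_lt hy hz₂)).le⟩
  have hz_mem : z ∈ cdf μ ⁻¹' Iic a := hz.le
  have hmax : sSup (cdf μ ⁻¹' Iic a) ∈ cdf μ ⁻¹' Iic a :=
    (isClosed_Iic.preimage (continuous_cdf μ)).csSup_mem ⟨z, hz_mem⟩ hbdd
  have hIic : cdf μ ⁻¹' Iic a = Iic (sSup (cdf μ ⁻¹' Iic a)) :=
    Subset.antisymm (fun y hy => le_csSup hbdd hy)
      (fun y hy => ((monotone_cdf μ) hy).trans hmax)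
  have hval : cdf μ (sSup (cdf μ ⁻¹' Iic a)) = a :=
    le_antisymm hmax (hz ▸ monotone_cdf μ (le_csSup hbdd hz_mem) :)
  rw [hIic, ← ofReal_cdf, hval]

theorem map_cdf : μ.map (cdf μ) = volume.restrict (Icc 0 1) := by
  have : IsProbabilityMeasure (μ.map (cdf μ)) :=
    Measure.isProbabilityMeasure_map (continuous_cdf μ).measurable.aemeasurable
  refine Measure.ext_of_Iic _ _ fun a => ?_
  rw [Measure.map_apply (continuous_cdf μ).measurable measurableSet_Iic,
    Measure.restrict_apply measurableSet_Iic]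
  rcases le_or_gt a 0 with ha0 | ha0
  · have hsub : Iic a ∩ Icc 0 1 ⊆ {0} := fun x hx => le_antisymm (hx.1.trans ha0) hx.2.1
    rw [measure_mono_null hsub (Real.volume_singleton), ← nonpos_iff_eq_zero,
      ← ENNReal.ofReal_zero]
    refine ge_of_tendsto
      (ENNReal.continuous_ofReal.tendsto 0 |>.mono_left (nhdsWithin_le_nhds (s := Ioi 0))) ?_
    filter_upwards [Ioo_mem_nhdsGT one_pos] with b hb
    rw [← measure_cdf_preimage_Iic μ hb]
    exact measure_mono (preimage_mono (Iic_subset_Iic.2 (ha0.trans hb.1.le)))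
  rcases lt_or_ge a 1 with ha1 | ha1
  · have hIcc : Iic a ∩ Icc 0 1 = Icc 0 a := by
      ext
      simp only [mem_inter_iff, mem_Iic, mem_Icc]
      grind
    rw [measure_cdf_preimage_Iic μ ⟨ha0, ha1⟩, hIcc, Real.volume_Icc, sub_zero]
  · have huniv : cdf μ ⁻¹' Iic a = univ :=
      eq_univ_of_forall fun y => (cdf_le_one μ y).trans ha1
    rw [huniv, measure_univ, inter_eq_right.2 (Icc_subset_Iic_self.trans (Iic_subset_Iic.2 ha1)),
      Real.volume_Icc, sub_zero, ENNReal.ofReal_one]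

end ProbabilityIntegralTransform

lemma lintegral_Icc_ofReal_eq_one {g : ℝ → ℝ} (hg0 : ∀ v ∈ Icc (0 : ℝ) 1, 0 ≤ g v)
    (hg1 : ∫ v in Icc (0 : ℝ) 1, g v = 1) : ∫⁻ v in Icc (0 : ℝ) 1, ENNReal.ofReal (g v) = 1 := by
  have hint : IntegrableOn g (Icc 0 1) := by
    by_contra h
    rw [integral_undef h] at hg1
    exact zero_ne_one hg1
  rw [← ofReal_integral_eq_lintegral_ofReal hint
    ((ae_restrict_iff' measurableSet_Icc).2 (ae_of_all _ hg0)), hg1, ENNReal.ofReal_one]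

lemma lintegral_withDensity_copula_cdf (μ : Measure ℝ) [IsProbabilityMeasure μ]
    [NullSingletonClass μ] {c : ℝ → ℝ → ℝ} (hc : Measurable (Function.uncurry c))
    (hc0 : ∀ u ∈ Icc (0 : ℝ) 1, ∀ v ∈ Icc (0 : ℝ) 1, 0 ≤ c u v)
    (hc1 : ∀ u ∈ Icc (0 : ℝ) 1, ∫ v in Icc (0 : ℝ) 1, c u v = 1) {A : Set ℝ}
    (hA : MeasurableSet A) :
    ∫⁻ y, μ.withDensity (fun z => ENNReal.ofReal (c (cdf μ z) (cdf μ y))) A ∂μ = μ A := by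
  have hFm := (continuous_cdf μ).measurable
  have hinner (z : ℝ) : ∫⁻ y, ENNReal.ofReal (c (cdf μ z) (cdf μ y)) ∂μ = 1 := by
    rw [← lintegral_map (f := fun v => ENNReal.ofReal (c (cdf μ z) v))
      (hc.comp measurable_prodMk_left).ennreal_ofReal hFm, map_cdf,
      lintegral_Icc_ofReal_eq_one (hc0 _ (cdf_mem_Icc μ z)) (hc1 _ (cdf_mem_Icc μ z))]
  simp_rw [withDensity_apply _ hA]
  rw [lintegral_lintegral_swap (hc.comp ((hFm.comp measurable_snd).prodMk
    (hFm.comp measurable_fst))).ennreal_ofReal.aemeasurable]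
  simp_rw [hinner, setLIntegral_one]

section HMW

def IsHMWStrategy (f0 : ℝ → ℝ) (c : ℕ → ℝ → ℝ → ℝ) (κ : ∀ n, Kernel (Fin n → ℝ) ℝ) : Prop :=
  ∀ n (x : Fin n → ℝ), κ n x = volume.withDensity fun z => ENNReal.ofReal (hmwDensity f0 c n x z)

variable {f0 : ℝ → ℝ} {c : ℕ → ℝ → ℝ → ℝ} {κ : ∀ n, Kernel (Fin n → ℝ) ℝ}

lemma cdf_eq_setIntegral_of_eq_withDensity {μ : Measure ℝ} [IsProbabilityMeasure μ] {f : ℝ → ℝ}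
    (hμ : μ = volume.withDensity fun z => ENNReal.ofReal (f z)) (hf : Measurable f)
    (hf0 : ∀ z, 0 ≤ f z) (z : ℝ) : cdf μ z = ∫ t in Iic z, f t := by
  rw [cdf_eq_real, measureReal_def, hμ, withDensity_apply _ measurableSet_Iic,
    integral_eq_lintegral_of_nonneg_ae (ae_of_all _ hf0) hf.aestronglyMeasurable]

lemma IsHMWStrategy.nullSingletonClass (hκ : IsHMWStrategy f0 c κ) (n : ℕ) (x : Fin n → ℝ) :
    NullSingletonClass (κ n x) := by
  rw [hκ n x]
  infer_instance

variable [∀ n, IsMarkovKernel (κ n)]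

lemma IsHMWStrategy.hmwDensity_succ_snoc (hκ : IsHMWStrategy f0 c κ) {n : ℕ} {x : Fin n → ℝ}
    (hm : Measurable (hmwDensity f0 c n x)) (h0 : ∀ z, 0 ≤ hmwDensity f0 c n x z) (y : ℝ) :
    hmwDensity f0 c (n + 1) (Fin.snoc x y)
      = fun z => c (n + 1) (cdf (κ n x) z) (cdf (κ n x) y) * hmwDensity f0 c n x z := by
  ext z
  simp only [hmwDensity, Fin.init_snoc, Fin.snoc_last,
    cdf_eq_setIntegral_of_eq_withDensity (hκ n x) hm h0]

lemma IsHMWStrategy.measurable_hmwDensity_and_nonneg (hκ : IsHMWStrategy f0 c κ)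
    (hf0meas : Measurable f0) (hf0pos : ∀ z, 0 < f0 z)
    (hcmeas : ∀ n, 1 ≤ n → Measurable (Function.uncurry (c n)))
    (hcpos : ∀ n, 1 ≤ n → ∀ u ∈ Icc (0 : ℝ) 1, ∀ v ∈ Icc (0 : ℝ) 1, 0 < c n u v)
    (n : ℕ) (x : Fin n → ℝ) :
    Measurable (hmwDensity f0 c n x) ∧ ∀ z, 0 ≤ hmwDensity f0 c n x z := by
  induction n with
  | zero => exact ⟨hf0meas, fun z => (hf0pos z).le⟩
  | succ n ih =>
    rw [← Fin.snoc_init_self x]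
    obtain ⟨hm, h0⟩ := ih (Fin.init x)
    have := hκ.nullSingletonClass n (Fin.init x)
    have hF := (continuous_cdf (κ n (Fin.init x))).measurable
    rw [hκ.hmwDensity_succ_snoc hm h0]
    exact ⟨((hcmeas _ n.succ_pos).comp (hF.prodMk measurable_const)).mul hm, fun z =>
      mul_nonneg (hcpos _ n.succ_pos _ (cdf_mem_Icc _ _) _ (cdf_mem_Icc _ _)).le (h0 z)⟩

lemma IsHMWStrategy.kernel_succ_snoc (hκ : IsHMWStrategy f0 c κ)
    (hf0meas : Measurable f0) (hf0pos : ∀ z, 0 < f0 z)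
    (hcmeas : ∀ n, 1 ≤ n → Measurable (Function.uncurry (c n)))
    (hcpos : ∀ n, 1 ≤ n → ∀ u ∈ Icc (0 : ℝ) 1, ∀ v ∈ Icc (0 : ℝ) 1, 0 < c n u v)
    (n : ℕ) (x : Fin n → ℝ) (y : ℝ) :
    κ (n + 1) (Fin.snoc x y) =
      (κ n x).withDensity fun z => ENNReal.ofReal (c (n + 1) (cdf (κ n x) z) (cdf (κ n x) y)) := by
  obtain ⟨hm, h0⟩ := hκ.measurable_hmwDensity_and_nonneg hf0meas hf0pos hcmeas hcpos n x
  have := hκ.nullSingletonClass n x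
  have hF := (continuous_cdf (κ n x)).measurable
  calc κ (n + 1) (Fin.snoc x y)
      = volume.withDensity ((fun z => ENNReal.ofReal (hmwDensity f0 c n x z)) *
          fun z => ENNReal.ofReal (c (n + 1) (cdf (κ n x) z) (cdf (κ n x) y))) := by
        rw [hκ, hκ.hmwDensity_succ_snoc hm h0]
        congr 1
        ext z
        rw [Pi.mul_apply, mul_comm, ENNReal.ofReal_mul
          (hcpos _ n.succ_pos _ (cdf_mem_Icc _ _) _ (cdf_mem_Icc _ _)).le]
    _ = _ := by
        rw [withDensity_mul volume hm.ennreal_ofReal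
          (g := fun z => ENNReal.ofReal (c (n + 1) (cdf (κ n x) z) (cdf (κ n x) y)))
          ((hcmeas _ n.succ_pos).comp (hF.prodMk measurable_const)).ennreal_ofReal, ← hκ n x]

lemma IsHMWStrategy.isPredictiveMartingale (hκ : IsHMWStrategy f0 c κ)
    (hf0meas : Measurable f0) (hf0pos : ∀ z, 0 < f0 z)
    (hcmeas : ∀ n, 1 ≤ n → Measurable (Function.uncurry (c n)))
    (hcpos : ∀ n, 1 ≤ n → ∀ u ∈ Icc (0 : ℝ) 1, ∀ v ∈ Icc (0 : ℝ) 1, 0 < c n u v)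
    (hcmarg₂ : ∀ n, 1 ≤ n → ∀ u ∈ Icc (0 : ℝ) 1, ∫ v in Icc (0 : ℝ) 1, c n u v = 1) :
    IsPredictiveMartingale κ := by
  intro n x A hA
  have := hκ.nullSingletonClass n x
  simp_rw [hκ.kernel_succ_snoc hf0meas hf0pos hcmeas hcpos]
  exact lintegral_withDensity_copula_cdf (κ n x) (hcmeas _ n.succ_pos)
    (fun u hu v hv => (hcpos _ n.succ_pos u hu v hv).le) (hcmarg₂ _ n.succ_pos) hA

end HMW

theorem hmw_strategy_cid_general (f0 : ℝ → ℝ) (c : ℕ → ℝ → ℝ → ℝ)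
    (hf0meas : Measurable f0) (hf0pos : ∀ z, 0 < f0 z)
    (hcmeas : ∀ n, 1 ≤ n → Measurable (Function.uncurry (c n)))
    (hcpos : ∀ n, 1 ≤ n → ∀ u ∈ Set.Icc (0 : ℝ) 1, ∀ v ∈ Set.Icc (0 : ℝ) 1, 0 < c n u v)
    (hcmarg₂ : ∀ n, 1 ≤ n → ∀ u ∈ Set.Icc (0 : ℝ) 1, ∫ v in Set.Icc (0 : ℝ) 1, c n u v = 1)
    (κ : ∀ n, Kernel (Fin n → ℝ) ℝ) [∀ n, IsMarkovKernel (κ n)]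
    (hκ : ∀ n (x : Fin n → ℝ),
      κ n x = volume.withDensity (fun z => ENNReal.ofReal (hmwDensity f0 c n x z)))
    (P : Measure (ℕ → ℝ)) [IsProbabilityMeasure P] (hP : IsStrategyLaw κ P) :
    CID P (fun n ω => ω n) :=
  (IsHMWStrategy.isPredictiveMartingale hκ hf0meas hf0pos hcmeas hcpos hcmarg₂).cid hP

/-- **Theorem.** Let `σ` be the HMW strategy on `ℝ`, i.e. the strategy whose predictive
`σ_n(x)` has Lebesgue density `f_n(· | x)` given by the copula recursion. Then the
coordinate process is c.i.d. under `P_σ`. -/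
theorem hmw_strategy_cid (f0 : ℝ → ℝ) (c : ℕ → ℝ → ℝ → ℝ)
    (hf0meas : Measurable f0) (hf0pos : ∀ z, 0 < f0 z)
    (hf0int : ∫ z, f0 z = 1)
    (hcmeas : ∀ n, 1 ≤ n → Measurable (Function.uncurry (c n)))
    (hcpos : ∀ n, 1 ≤ n → ∀ u ∈ Set.Icc (0 : ℝ) 1, ∀ v ∈ Set.Icc (0 : ℝ) 1, 0 < c n u v)
    (hcmarg₁ : ∀ n, 1 ≤ n → ∀ v ∈ Set.Icc (0 : ℝ) 1, ∫ u in Set.Icc (0 : ℝ) 1, c n u v = 1)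
    (hcmarg₂ : ∀ n, 1 ≤ n → ∀ u ∈ Set.Icc (0 : ℝ) 1, ∫ v in Set.Icc (0 : ℝ) 1, c n u v = 1)
    (κ : ∀ n, Kernel (Fin n → ℝ) ℝ) [∀ n, IsMarkovKernel (κ n)]
    (hκ : ∀ n (x : Fin n → ℝ),
      κ n x = volume.withDensity (fun z => ENNReal.ofReal (hmwDensity f0 c n x z)))
    (P : Measure (ℕ → ℝ)) [IsProbabilityMeasure P] (hP : IsStrategyLaw κ P) :
    CID P (fun n ω => ω n) :=
  hmw_strategy_cid_general f0 c hf0meas hf0pos hcmeas hcpos hcmarg₂ κ hκ P hP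

end PredictiveBayes
end

section
/- Let λ be a σ-finite measure on (S, B) and σ a strategy dominated by λ with densities f_n, and let g_n(x) = f_0(x_1) f_1(x_2 | x_1) ··· f_{n−1}(x_n | x_1, ..., x_{n−1}). Then P_σ is exchangeable if and only if, for every n ≥ 2 and every permutation φ of S^n, g_n(φ(x)) = g_n(x) for P_σ∘(X_1, ..., X_n)^{−1}-almost all x ∈ S^n. -/
open MeasureTheory ProbabilityTheory
open scoped ENNReal

namespace PredictiveBayes

variable {S : Type*} [MeasurableSpace S]

/-- The process `Y` is exchangeable under `P`. -/
def Exchangeable {Ω : Type*} [MeasurableSpace Ω] (P : Measure Ω) (Y : ℕ → Ω → S) : Prop :=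
  ∀ (n : ℕ) (e : Equiv.Perm (Fin n)),
    P.map (fun ω (i : Fin n) => Y (e i) ω) = P.map (fun ω (i : Fin n) => Y i ω)

/-- Given predictive densities `f`, `jointDensity f n` is the function
`g_n(x) = f_0(x_1) f_1(x_2 | x_1) ⋯ f_{n-1}(x_n | x_1, …, x_{n-1})`. -/
noncomputable def jointDensity (f : ∀ n, (Fin n → S) → S → ℝ≥0∞) : ∀ n, (Fin n → S) → ℝ≥0∞
  | 0 => fun _ => 1
  | n + 1 => fun x => jointDensity f n (Fin.init x) * f n (Fin.init x) (x (Fin.last n))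

/-!
By induction on `n`, the law of `(X_1, …, X_n)` is `λⁿ` with density `g_n`: the `(n+1)`-st law
is the composition-product of the `n`-th one with `κ_n`, i.e. `λⁿ ⊗ λ` with density
`g_n(x) f_n(y | x) = g_{n+1}(x, y)`. As `λⁿ` is invariant under permutations `φ`, the image of
`g_n · λⁿ` under `φ` is `(g_n ∘ φ⁻¹) · λⁿ`, so exchangeability says exactly that
`g_n ∘ φ = g_n` holds `λⁿ`-a.e. for all `φ`. This is only apparently stronger than equality
`g_n · λⁿ`-a.e.: the two agree on `{g_n ≠ 0}`, on `{g_n ∘ φ ≠ 0}` one applies the hypothesis for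
`φ⁻¹` at the point `φ(x)`, and on the rest both sides vanish.
-/
theorem _root_.MeasureTheory.MeasurePreserving.map_withDensity_comp {α β : Type*}
    [MeasurableSpace α] [MeasurableSpace β] {μ : Measure α} {ν : Measure β} {T : α → β}
    (hT : MeasurePreserving T μ ν) (hTe : MeasurableEmbedding T) (g : β → ℝ≥0∞) :
    (μ.withDensity (g ∘ T)).map T = ν.withDensity g := by
  ext s hs
  rw [Measure.map_apply hT.measurable hs, withDensity_apply _ (hT.measurable hs),
    withDensity_apply _ hs]
  exact hT.setLIntegral_comp_preimage_emb hTe g s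

theorem _root_.MeasureTheory.MeasurePreserving.comp_ae_eq_of_ae_withDensity {α : Type*}
    [MeasurableSpace α] {μ : Measure α} {T : α ≃ᵐ α} (hT : MeasurePreserving T μ μ)
    {g : α → ℝ≥0∞} (hg : Measurable g) (h : g ∘ T =ᵐ[μ.withDensity g] g)
    (h_symm : g ∘ T.symm =ᵐ[μ.withDensity g] g) :
    g ∘ T =ᵐ[μ] g := by
  have h₁ : ∀ᵐ x ∂μ, g x ≠ 0 → g (T x) = g x := (ae_withDensity_iff hg).1 h
  have h₂ : ∀ᵐ x ∂μ, g (T x) ≠ 0 → g x = g (T x) := by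
    simpa using hT.quasiMeasurePreserving.ae ((ae_withDensity_iff hg).1 h_symm)
  filter_upwards [h₁, h₂] with x hx₁ hx₂
  by_cases hx : g x = 0
  · by_cases hTx : g (T x) = 0
    · simp [hx, hTx]
    · exact (hx₂ hTx).symm
  · exact hx₁ hx

theorem _root_.MeasureTheory.Measure.bind_map_eq_compProd_map {α β γ : Type*}
    [MeasurableSpace α] [MeasurableSpace β] [MeasurableSpace γ]
    (μ : Measure α) [SFinite μ] (κ : Kernel α β) [IsSFiniteKernel κ]
    {F : α × β → γ} (hF : Measurable F) :
    μ.bind (fun a => (κ a).map (fun b => F (a, b))) = (μ ⊗ₘ κ).map F := by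
  rw [Measure.compProd_eq_comp_prod, Measure.map_comp _ _ hF]
  congr 1
  funext a
  rw [Kernel.map_apply _ hF, Kernel.prod_apply, Kernel.id_apply, Measure.dirac_prod,
    Measure.map_map hF measurable_prodMk_left]
  rfl

theorem _root_.MeasureTheory.Measure.withDensity_compProd_withDensity_const {α β : Type*}
    [MeasurableSpace α] [MeasurableSpace β] (μ : Measure α) [SFinite μ] (ν : Measure β)
    [SFinite ν] {g : α → ℝ≥0∞} {f : α → β → ℝ≥0∞} (hg : Measurable g)
    (hf : Measurable (Function.uncurry f))
    [IsSFiniteKernel ((Kernel.const α ν).withDensity f)] :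
    μ.withDensity g ⊗ₘ (Kernel.const α ν).withDensity f
      = (μ.prod ν).withDensity (fun p => g p.1 * f p.1 p.2) := by
  rw [Measure.compProd_withDensity hf, Measure.compProd_const, prod_withDensity_left hg]
  exact (withDensity_mul _ (hg.comp measurable_fst) hf).symm

theorem _root_.ProbabilityTheory.Kernel.eq_withDensity_const {α β : Type*}
    [MeasurableSpace α] [MeasurableSpace β] {κ : Kernel α β} {ν : Measure β}
    {f : α → β → ℝ≥0∞} (hf : Measurable (Function.uncurry f))
    (hκ : ∀ a, κ a = ν.withDensity (f a)) [SFinite ν] :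
    κ = (Kernel.const α ν).withDensity f := by
  ext1 a
  rw [Kernel.withDensity_apply _ hf, hκ, Kernel.const_apply]

def permuteCoords {ι : Type*} (e : Equiv.Perm ι) : (ι → S) ≃ᵐ (ι → S) :=
  MeasurableEquiv.arrowCongr' e.symm (MeasurableEquiv.refl S)

@[simp]
theorem permuteCoords_apply {ι : Type*} (e : Equiv.Perm ι) (x : ι → S) :
    permuteCoords e x = fun i => x (e i) :=
  rfl

theorem measurePreserving_permuteCoords {ι : Type*} [Fintype ι] (lam : Measure S)
    [SigmaFinite lam] (e : Equiv.Perm ι) :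
    MeasurePreserving (permuteCoords e) (Measure.pi fun _ : ι => lam)
      (Measure.pi fun _ : ι => lam) :=
  measurePreserving_arrowCongr' _ _ e.symm _ fun _ => MeasurePreserving.id lam

def snocEquiv (n : ℕ) : (Fin n → S) × S ≃ᵐ (Fin (n + 1) → S) :=
  MeasurableEquiv.prodComm.trans (MeasurableEquiv.piFinSuccAbove (fun _ => S) (Fin.last n)).symm

theorem coe_snocEquiv (n : ℕ) : ⇑(snocEquiv (S := S) n) = fun p => Fin.snoc p.1 p.2 := by
  funext p
  simp only [snocEquiv, MeasurableEquiv.trans_apply, MeasurableEquiv.piFinSuccAbove_symm_apply,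
    Fin.insertNthEquiv_last]
  rfl

theorem measurePreserving_snocEquiv (lam : Measure S) [SigmaFinite lam] (n : ℕ) :
    MeasurePreserving (snocEquiv n) ((Measure.pi fun _ : Fin n => lam).prod lam)
      (Measure.pi fun _ : Fin (n + 1) => lam) :=
  (measurePreserving_piFinSuccAbove (fun _ => lam) (Fin.last n)).symm.comp
    Measure.measurePreserving_swap

theorem measurable_jointDensity (f : ∀ n, (Fin n → S) → S → ℝ≥0∞)
    (hf : ∀ n, Measurable (fun p : (Fin n → S) × S => f n p.1 p.2)) :
    ∀ n, Measurable (jointDensity f n)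
  | 0 => measurable_const
  | n + 1 => by
    have h_init : Measurable (fun x : Fin (n + 1) → S => Fin.init x) :=
      measurable_pi_lambda _ fun i => measurable_pi_apply i.castSucc
    exact ((measurable_jointDensity f hf n).comp h_init).mul
      ((hf n).comp (h_init.prodMk (measurable_pi_apply (Fin.last n))))

theorem stratFDD_eq_withDensity (lam : Measure S) [SigmaFinite lam]
    (f : ∀ n, (Fin n → S) → S → ℝ≥0∞)
    (hf : ∀ n, Measurable (fun p : (Fin n → S) × S => f n p.1 p.2))
    (κ : ∀ n, Kernel (Fin n → S) S) [∀ n, IsSFiniteKernel (κ n)]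
    (hκ : ∀ n (x : Fin n → S), κ n x = lam.withDensity (f n x)) :
    ∀ n, stratFDD κ n = (Measure.pi fun _ : Fin n => lam).withDensity (jointDensity f n)
  | 0 => by
    rw [stratFDD, Measure.pi_of_empty _ (fun i => i.elim0)]
    exact withDensity_one.symm
  | n + 1 => by
    have hκ_eq := Kernel.eq_withDensity_const (hf n) (hκ n)
    -- a kernel with an unbounded density need not be s-finite; this one is, being `κ n`
    have : IsSFiniteKernel ((Kernel.const _ lam).withDensity (f n)) := hκ_eq ▸ inferInstance
    have h_snoc : (fun p : (Fin n → S) × S => jointDensity f n p.1 * f n p.1 p.2)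
        = jointDensity f (n + 1) ∘ snocEquiv n := by
      funext p
      simp [coe_snocEquiv, jointDensity]
    have h_meas :
        Measurable (fun p : (Fin n → S) × S => (Fin.snoc p.1 p.2 : Fin (n + 1) → S)) :=
      coe_snocEquiv (S := S) n ▸ (snocEquiv n).measurable
    calc stratFDD κ (n + 1)
        = ((Measure.pi fun _ => lam).withDensity (jointDensity f n) ⊗ₘ κ n).map
            (snocEquiv n) := by
          rw [stratFDD, stratFDD_eq_withDensity lam f hf κ hκ n, coe_snocEquiv,
            ← Measure.bind_map_eq_compProd_map _ _ h_meas]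
      _ = _ := by
          rw [hκ_eq, Measure.withDensity_compProd_withDensity_const _ _
            (measurable_jointDensity f hf n) (hf n), h_snoc]
          exact (measurePreserving_snocEquiv lam n).map_withDensity_comp
            (snocEquiv n).measurableEmbedding _

theorem exchangeable_iff_map_permuteCoords {Ω : Type*} [MeasurableSpace Ω] (P : Measure Ω)
    {Y : ℕ → Ω → S} (hY : ∀ i, Measurable (Y i)) :
    Exchangeable P Y ↔ ∀ n (e : Equiv.Perm (Fin n)),
      (P.map fun ω (i : Fin n) => Y i ω).map (permuteCoords e)
        = P.map fun ω (i : Fin n) => Y i ω := by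
  refine forall₂_congr fun n e => ?_
  rw [Measure.map_map (permuteCoords e).measurable (measurable_pi_lambda _ fun i => hY i)]
  rfl

theorem withDensity_map_permuteCoords_eq_iff {ι : Type*} [Fintype ι] (lam : Measure S)
    [SigmaFinite lam] {g : (ι → S) → ℝ≥0∞} (hg : Measurable g) (e : Equiv.Perm ι) :
    ((Measure.pi fun _ => lam).withDensity g).map (permuteCoords e)
        = (Measure.pi fun _ => lam).withDensity g ↔
      g ∘ permuteCoords e.symm =ᵐ[Measure.pi fun _ => lam] g := by
  have h_map : ((Measure.pi fun _ => lam).withDensity g).map (permuteCoords e)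
      = (Measure.pi fun _ => lam).withDensity (g ∘ permuteCoords e.symm) := by
    conv_lhs => rw [show g = (g ∘ permuteCoords e.symm) ∘ permuteCoords e by funext x; simp]
    exact (measurePreserving_permuteCoords lam e).map_withDensity_comp
      (permuteCoords e).measurableEmbedding _
  rw [h_map]
  exact withDensity_eq_iff_of_sigmaFinite
    (hg.comp (permuteCoords e.symm).measurable).aemeasurable hg.aemeasurable

theorem dominated_exchangeable_iff_general {S : Type*} [MeasurableSpace S]
    (lam : Measure S) [SigmaFinite lam]
    (f : ∀ n, (Fin n → S) → S → ℝ≥0∞)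
    (hf : ∀ n, Measurable (fun p : (Fin n → S) × S => f n p.1 p.2))
    (κ : ∀ n, Kernel (Fin n → S) S) [∀ n, IsMarkovKernel (κ n)]
    (hκ : ∀ n (x : Fin n → S), κ n x = lam.withDensity (f n x))
    (P : Measure (ℕ → S)) (hP : IsStrategyLaw κ P) :
    Exchangeable P (fun n ω => ω n) ↔
      ∀ n : ℕ, 2 ≤ n → ∀ e : Equiv.Perm (Fin n),
        ∀ᵐ x ∂(P.map (fun ω (i : Fin n) => ω i)),
          jointDensity f n (fun i => x (e i)) = jointDensity f n x := by
  have hg := measurable_jointDensity f hf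
  have h_fdd n : P.map (fun ω (i : Fin n) => ω i)
      = (Measure.pi fun _ => lam).withDensity (jointDensity f n) :=
    (hP n).trans (stratFDD_eq_withDensity lam f hf κ hκ n)
  simp_rw [exchangeable_iff_map_permuteCoords P measurable_pi_apply, h_fdd,
    withDensity_map_permuteCoords_eq_iff lam (hg _)]
  constructor
  · intro h n _ e
    exact (withDensity_absolutelyContinuous _ _).ae_le (h n e.symm)
  · intro h n e
    rcases lt_or_ge n 2 with hn | hn
    · have : Subsingleton (Fin n) := not_nontrivial_iff_subsingleton.1 <| by
        rw [Fin.nontrivial_iff_two_le]; omega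
      rw [Subsingleton.elim e.symm 1]
      rfl
    · exact (measurePreserving_permuteCoords lam e.symm).comp_ae_eq_of_ae_withDensity (hg n)
        (h n hn e.symm) (h n hn e)

/-- **Theorem (exchangeability for dominated strategies).** Let `λ` be a σ-finite
measure and `κ` a strategy dominated by `λ`, with predictive densities `f_n(· | x)` and
joint densities `g_n`. Then `P_κ` is exchangeable if and only if, for every `n ≥ 2` and
every permutation `φ` of `Sⁿ`, `g_n(φ(x)) = g_n(x)` for
`P_κ ∘ (X_1, …, X_n)⁻¹`-almost all `x ∈ Sⁿ`. -/
theorem dominated_exchangeable_iff {S : Type*} [MeasurableSpace S] [StandardBorelSpace S]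
    [Nonempty S]
    (lam : Measure S) [SigmaFinite lam]
    (f : ∀ n, (Fin n → S) → S → ℝ≥0∞)
    (hf : ∀ n, Measurable (fun p : (Fin n → S) × S => f n p.1 p.2))
    (κ : ∀ n, Kernel (Fin n → S) S) [∀ n, IsMarkovKernel (κ n)]
    (hκ : ∀ n (x : Fin n → S), κ n x = lam.withDensity (f n x))
    (P : Measure (ℕ → S)) [IsProbabilityMeasure P] (hP : IsStrategyLaw κ P) :
    Exchangeable P (fun n ω => ω n) ↔
      ∀ n : ℕ, 2 ≤ n → ∀ e : Equiv.Perm (Fin n),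
        ∀ᵐ x ∂(P.map (fun ω (i : Fin n) => ω i)),
          jointDensity f n (fun i => x (e i)) = jointDensity f n x :=
  dominated_exchangeable_iff_general lam f hf κ hκ P hP

end PredictiveBayes
end
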